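/- Let (x_k) be iterates of the randomized Kaczmarz method with mismatched adjoint applied to the perturbed right-hand side b + r, where A x̂ = b is consistent. With M = I − VᵀDA, the expectation satisfies E(x_k − x̂) = M^k (x_0 − x̂) + Σ_{l=0}^{k−1} M^l VᵀD r. -/

import Mathlib

open Matrix Finset

/-- Iterates of the randomized Kaczmarz method with mismatched adjoint along a given
sequence of chosen row indices `ω`, applied with right-hand side `c`. -/
noncomputable def rkmaIter {m n : ℕ} (A V : Matrix (Fin m) (Fin n) ℝ) (c : Fin m → ℝ)
    (x0 : Fin n → ℝ) : (k : ℕ) → (Fin k → Fin m) → (Fin n → ℝ)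
  | 0, _ => x0
  | k + 1, ω =>
      let x := rkmaIter A V c x0 k (fun j => ω j.castSucc)
      let i := ω (Fin.last k)
      x - ((A i ⬝ᵥ x - c i) / (A i ⬝ᵥ V i)) • V i

/-!
Since `A x̂ = b`, the error after a step with right-hand side `b + r` is the step with
right-hand side `r` applied to the error `x - x̂`. Averaging that step over the last index with
weights `pᵢ` gives the affine map `y ↦ M y + VᵀD r`, so the expected errors obey
`eₖ₊₁ = M eₖ + VᵀD r`, and unrolling this recursion gives the formula.
-/
theorem Fin.sum_prod_smul_snoc {R α E : Type*} [CommSemiring R] [Fintype α] [AddCommMonoid E]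
    [Module R E] (p : α → R) {k : ℕ} (F : (Fin (k + 1) → α) → E) :
    ∑ ω : Fin (k + 1) → α, (∏ j, p (ω j)) • F ω
      = ∑ ω : Fin k → α, (∏ j, p (ω j)) • ∑ i, p i • F (Fin.snoc ω i) := by
  rw [← (Fin.snocEquiv fun _ => α).sum_comp, Fintype.sum_prod_type_right]
  refine Finset.sum_congr rfl fun ω _ => ?_
  simp only [Finset.smul_sum, smul_smul, Fin.snocEquiv_apply, Fin.prod_univ_castSucc,
    Fin.snoc_castSucc, Fin.snoc_last]
  rfl

theorem Matrix.eq_pow_mulVec_add_sum_of_succ {R ι : Type*} [CommSemiring R] [Fintype ι]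
    [DecidableEq ι] (M : Matrix ι ι R) (c : ι → R) (u : ℕ → ι → R)
    (hu : ∀ k, u (k + 1) = M *ᵥ u k + c) (k : ℕ) :
    u k = (M ^ k) *ᵥ u 0 + ∑ l ∈ range k, (M ^ l) *ᵥ c := by
  induction k with
  | zero => simp
  | succ k ih =>
    rw [hu, ih, mulVec_add, mulVec_mulVec, ← pow_succ', mulVec_sum, sum_range_succ',
      pow_zero, one_mulVec, add_assoc]
    simp only [mulVec_mulVec, ← pow_succ']

section KaczmarzStep

variable {𝕜 ι κ : Type*} [Field 𝕜] [Fintype κ] (A V : Matrix ι κ 𝕜)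

def kaczmarzStep (c : ι → 𝕜) (x : κ → 𝕜) (i : ι) : κ → 𝕜 :=
  x - ((A i ⬝ᵥ x - c i) / (A i ⬝ᵥ V i)) • V i

theorem kaczmarzStep_add_sub {b : ι → 𝕜} {xhat : κ → 𝕜} (hb : A *ᵥ xhat = b)
    (r : ι → 𝕜) (x : κ → 𝕜) (i : ι) :
    kaczmarzStep A V (b + r) x i - xhat = kaczmarzStep A V r (x - xhat) i := by
  have hbi : A i ⬝ᵥ xhat = b i := congrFun hb i
  simp only [kaczmarzStep, dotProduct_sub, hbi, Pi.add_apply]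
  rw [sub_sub (A i ⬝ᵥ x), sub_right_comm]

theorem sum_smul_kaczmarzStep [Fintype ι] [DecidableEq ι] [DecidableEq κ] {p : ι → 𝕜}
    (hps : ∑ i, p i = 1) (c : ι → 𝕜) (y : κ → 𝕜) :
    ∑ i, p i • kaczmarzStep A V c y i
      = (1 - Vᵀ * diagonal (fun i => p i / (A i ⬝ᵥ V i)) * A) *ᵥ y
        + (Vᵀ * diagonal (fun i => p i / (A i ⬝ᵥ V i))) *ᵥ c := by
  simp only [kaczmarzStep, smul_sub, smul_smul, sum_sub_distrib, ← sum_smul, hps, one_smul,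
    sub_mulVec, one_mulVec, ← mulVec_mulVec, mulVec_transpose, vecMul_eq_sum, mulVec_diagonal]
  rw [sub_add, ← sum_sub_distrib]
  congr 1
  refine sum_congr rfl fun i _ => ?_
  rw [← sub_smul]
  change _ = (_ * (A i ⬝ᵥ y) - _) • _
  congr 1
  ring

end KaczmarzStep

section RandomizedKaczmarz

variable {m n : ℕ} (A V : Matrix (Fin m) (Fin n) ℝ)

theorem rkmaIter_snoc (c : Fin m → ℝ) (x0 : Fin n → ℝ) {k : ℕ} (ω : Fin k → Fin m)
    (i : Fin m) :
    rkmaIter A V c x0 (k + 1) (Fin.snoc ω i) = kaczmarzStep A V c (rkmaIter A V c x0 k ω) i := by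
  simp only [rkmaIter, kaczmarzStep, Fin.snoc_castSucc, Fin.snoc_last]

theorem sum_prod_smul_rkmaIter_sub_succ {p : Fin m → ℝ} (hps : ∑ i, p i = 1)
    {b : Fin m → ℝ} {xhat : Fin n → ℝ} (hb : A *ᵥ xhat = b) (r : Fin m → ℝ)
    (x0 : Fin n → ℝ) (k : ℕ) :
    ∑ ω : Fin (k + 1) → Fin m, (∏ j, p (ω j)) • (rkmaIter A V (b + r) x0 (k + 1) ω - xhat)
      = (1 - Vᵀ * diagonal (fun i => p i / (A i ⬝ᵥ V i)) * A)
          *ᵥ ∑ ω : Fin k → Fin m, (∏ j, p (ω j)) • (rkmaIter A V (b + r) x0 k ω - xhat)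
        + (Vᵀ * diagonal (fun i => p i / (A i ⬝ᵥ V i))) *ᵥ r := by
  have hmass : ∑ ω : Fin k → Fin m, ∏ j, p (ω j) = 1 := by
    rw [← Fintype.sum_pow, hps, one_pow]
  simp only [Fin.sum_prod_smul_snoc, rkmaIter_snoc, kaczmarzStep_add_sub A V hb,
    sum_smul_kaczmarzStep A V hps, smul_add, sum_add_distrib, ← sum_smul, hmass, one_smul,
    mulVec_sum, mulVec_smul]

end RandomizedKaczmarz

theorem rkma_expectation_noisy_general {m n : ℕ} (A V : Matrix (Fin m) (Fin n) ℝ)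
    (p : Fin m → ℝ) (hps : ∑ i, p i = 1)
    (b r : Fin m → ℝ) (xhat : Fin n → ℝ) (hb : A.mulVec xhat = b)
    (x0 : Fin n → ℝ)
    (D : Matrix (Fin m) (Fin m) ℝ)
    (hD : D = Matrix.diagonal (fun i => p i / (A i ⬝ᵥ V i)))
    (M : Matrix (Fin n) (Fin n) ℝ) (hMdef : M = 1 - Vᵀ * D * A) :
    ∀ k : ℕ,
      ∑ ω : Fin k → Fin m, (∏ j, p (ω j)) • (rkmaIter A V (b + r) x0 k ω - xhat)
        = (M ^ k).mulVec (x0 - xhat)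
          + ∑ l ∈ Finset.range k, (M ^ l * (Vᵀ * D)).mulVec r := by
  subst hD hMdef
  intro k
  have hunrolled := Matrix.eq_pow_mulVec_add_sum_of_succ _ _
    (fun k => ∑ ω : Fin k → Fin m, (∏ j, p (ω j)) • (rkmaIter A V (b + r) x0 k ω - xhat))
    (sum_prod_smul_rkmaIter_sub_succ A V hps hb r x0) k
  simpa [← mulVec_mulVec, rkmaIter] using hunrolled

theorem rkma_expectation_noisy {m n : ℕ} (A V : Matrix (Fin m) (Fin n) ℝ)
    (p : Fin m → ℝ) (hp : ∀ i, 0 < p i) (hps : ∑ i, p i = 1)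
    (hav : ∀ i, 0 < A i ⬝ᵥ V i)
    (b r : Fin m → ℝ) (xhat : Fin n → ℝ) (hb : A.mulVec xhat = b)
    (x0 : Fin n → ℝ)
    (D : Matrix (Fin m) (Fin m) ℝ)
    (hD : D = Matrix.diagonal (fun i => p i / (A i ⬝ᵥ V i)))
    (M : Matrix (Fin n) (Fin n) ℝ) (hMdef : M = 1 - Vᵀ * D * A) :
    ∀ k : ℕ,
      ∑ ω : Fin k → Fin m, (∏ j, p (ω j)) • (rkmaIter A V (b + r) x0 k ω - xhat)
        = (M ^ k).mulVec (x0 - xhat)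
          + ∑ l ∈ Finset.range k, (M ^ l * (Vᵀ * D)).mulVec r :=
  rkma_expectation_noisy_general A V p hps b r xhat hb x0 D hD M hMdef
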